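/- arXiv:2601.01421 — 3 statements merged into one kernel-verified Lean document; each statement's English description precedes it below -/
import Mathlib

section
/- Let c be a choice function on a finite nonempty set X with degree of self-punishment sp(c) = j, and let ▷ be a strict linear order on X such that some rationalization by self-punishment Harm_c(▷) of c by ▷ satisfies max{ i : ▷_i ∈ Harm_c(▷) } = j. Writing X = {x^▷_1, …, x^▷_{|X|}} in decreasing ▷-order, for every h ∈ {1, …, j} there is a reversal (A, B) of c such that either c(A) = x^▷_h and c(B) = y_h, or c(A) = y_h and c(B) = x^▷_h, for some y_h ∈ X \ {x^▷_1, …, x^▷_j}. -/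
variable {X : Type*}

/-- A strict linear order: asymmetric, transitive, complete. -/
def IsSLO (r : X → X → Prop) : Prop :=
  (∀ a b : X, r a b → ¬ r b a) ∧ (∀ a b d : X, r a b → r b d → r a d) ∧
    (∀ a b : X, a ≠ b → r a b ∨ r b a)

/-- The set of the top `i` elements of `X` with respect to `r`
(those with fewer than `i` elements strictly above them). -/
def topSet (r : X → X → Prop) (i : ℕ) : Set X := {a | Set.ncard {b | r b a} < i}

/-- The `i`-th harmful distortion of `r`: the top `i` elements are moved,
in reverse order, below all the other elements. -/
def harmful (r : X → X → Prop) (i : ℕ) : X → X → Prop := fun a b =>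
  (b ∈ topSet r i ∧ (a ∈ topSet r i → r b a)) ∨
    (a ∉ topSet r i ∧ b ∉ topSet r i ∧ r a b)

/-- A choice function selects an element from every nonempty menu. -/
def IsChoice (c : Finset X → X) : Prop := ∀ A : Finset X, A.Nonempty → c A ∈ A

/-- `x` is the `r`-maximum of the menu `A`. -/
def IsMaxOf (r : X → X → Prop) (A : Finset X) (x : X) : Prop :=
  x ∈ A ∧ ∀ y ∈ A, y ≠ x → r x y

/-- A reversal (violation of WARP) of `c`. -/
def IsReversal [DecidableEq X] (c : Finset X → X) (A B : Finset X) : Prop :=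
  A.Nonempty ∧ B.Nonempty ∧ A ≠ B ∧ c A ≠ c B ∧ c A ∈ A ∩ B ∧ c B ∈ A ∩ B

/-- `I` is (the index set of) a rationalization by self-punishment of `c` by `r`. -/
def RSP [Fintype X] (c : Finset X → X) (r : X → X → Prop) (I : Finset ℕ) : Prop :=
  I.Nonempty ∧ (∀ i ∈ I, i ≤ Fintype.card X - 1) ∧
    ∀ A : Finset X, A.Nonempty → ∃ i ∈ I, IsMaxOf (harmful r i) A (c A)

/-- The degree of self-punishment of `c`: the minimum over all strict linear orders `r`
and all rationalizations by self-punishment of `c` by `r` of the maximal index used. -/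
noncomputable def sp [Fintype X] (c : Finset X → X) : ℕ :=
  sInf { m : ℕ | ∃ r : X → X → Prop, IsSLO r ∧ ∃ I : Finset ℕ,
    RSP c r I ∧ m ∈ I ∧ ∀ i ∈ I, i ≤ m }

/-- `c` is inconsistent: every ordered pair of distinct items is selected in some reversal. -/
def Inconsistent [DecidableEq X] (c : Finset X → X) : Prop :=
  ∀ x y : X, x ≠ y → ∃ A B : Finset X, IsReversal c A B ∧ c A = x ∧ c B = y

/-- The revealed preference `▷^{c,x}`. -/
def cxPref (c : Finset X → X) (x : X) : X → X → Prop := fun y z =>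
  (y = x ∧ z ≠ x) ∨
    (y ≠ x ∧ z ≠ x ∧ y ≠ z ∧ ∃ A : Finset X, x ∉ A ∧ z ∈ A ∧ c A = y)

/-- `c` violates WARP under constant nonreciprocal selection of `j` items. -/
def ViolatesCNS [Fintype X] [DecidableEq X] (c : Finset X → X) (j : ℕ) : Prop :=
  (∀ D : Finset X, D.card < j → ∃ A B : Finset X, IsReversal c A B ∧ c A ∉ D ∧ c B ∉ D) ∧
    ∃ xs : Finset X, xs.card = j ∧
      (∀ A B : Finset X, IsReversal c A B → c A ∈ xs ∨ c B ∈ xs) ∧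
      (∀ x ∈ xs, ∃ A B : Finset X, ∃ y : X, IsReversal c A B ∧ y ∉ xs ∧
        ((c A = x ∧ c B = y) ∨ (c A = y ∧ c B = x)))

/-- The relation `▷^c` built from the witnesses `x 1, …, x j`. -/
def witnessPref (c : Finset X → X) (x : ℕ → X) (j : ℕ) : X → X → Prop := fun y z =>
  (∃ g h : ℕ, 1 ≤ g ∧ g < h ∧ h ≤ j ∧ y = x g ∧ z = x h) ∨
    ((∀ g : ℕ, 1 ≤ g → g ≤ j → y ≠ x g) ∧ (∀ g : ℕ, 1 ≤ g → g ≤ j → z ≠ x g) ∧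
      ∃ A : Finset X, z ∈ A ∧ c A = y) ∨
    ((∃ g : ℕ, 1 ≤ g ∧ g ≤ j ∧ y = x g) ∧ (∀ g : ℕ, 1 ≤ g → g ≤ j → z ≠ x g))

/-!
Suppose `x_h`, with `h ≤ j`, is in no reversal against an element outside the top `j`. Since
every distortion used has index at most `j`, a choice outside the top `j` is the best element of
its menu outside the top `j`. Hence if `s` is chosen from a menu containing `x_h` and `x_h` is
chosen from a menu containing `y`, with `s, y` outside the top `j`, then `s` is above `y`: the
choice from `{x_h, y, s}` can be neither `x_h` nor `y` without a reversal. So `x_h` can be moved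
down to a position `q ≥ j` lying below all such `s` and above all such `y`. In the new order a
choice at position `k < j` is rationalized by the `(k - 1)`-th distortion, which puts it first,
and every other choice by the `(j - 1)`-th one, contradicting `sp c = j`.
-/

section Ranking

variable [Fintype X] {p : X → ℕ}

/-- `p x = h` says that `x` is the `h`-th best element of `X` for the order `(p · < p ·)`. -/
def IsRanking (p : X → ℕ) : Prop :=
  Function.Injective p ∧ ∀ x, p x ∈ Finset.Icc 1 (Fintype.card X)

theorem IsRanking.image_univ [DecidableEq X] (hp : IsRanking p) :
    Finset.univ.image p = Finset.Icc 1 (Fintype.card X) :=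
  Finset.eq_of_subset_of_card_le (by simpa [Finset.subset_iff] using hp.2)
    (by simp [Finset.card_image_of_injective _ hp.1])

theorem IsRanking.ncard_lt (hp : IsRanking p) (a : X) : {b | p b < p a}.ncard = p a - 1 := by
  classical
  have himage : p '' {b | p b < p a} = ↑(Finset.Ico 1 (p a)) := by
    ext m
    have hm : m ∈ Finset.Icc 1 (Fintype.card X) ↔ ∃ b, p b = m := by
      simp [← hp.image_univ]
    have ha := Finset.mem_Icc.1 (hp.2 a)
    simp only [Set.mem_image, Set.mem_ofPred_eq, Finset.coe_Ico, Set.mem_Ico]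
    constructor
    · rintro ⟨b, hb, rfl⟩
      exact ⟨(Finset.mem_Icc.1 (hp.2 b)).1, hb⟩
    · rintro ⟨h1, h2⟩
      obtain ⟨b, rfl⟩ := hm.1 (Finset.mem_Icc.2 ⟨h1, by omega⟩)
      exact ⟨b, h2, rfl⟩
  rw [← Set.ncard_image_of_injective _ hp.1, himage, Set.ncard_coe_finset, Nat.card_Ico]

theorem IsRanking.mem_topSet_iff (hp : IsRanking p) {i : ℕ} {a : X} :
    a ∈ topSet (p · < p ·) i ↔ p a ≤ i := by
  have := (Finset.mem_Icc.1 (hp.2 a)).1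
  change {b | p b < p a}.ncard < i ↔ _
  rw [hp.ncard_lt]
  omega

theorem IsRanking.isSLO (hp : IsRanking p) : IsSLO (p · < p ·) :=
  ⟨fun _ _ h => h.asymm, fun _ _ _ => lt_trans,
    fun _ _ hab => lt_or_gt_of_ne (hp.1.ne hab)⟩

theorem IsRanking.isMaxOf_harmful_iff (hp : IsRanking p) {i : ℕ} {A : Finset X} {x : X}
    (hx : i < p x) :
    IsMaxOf (harmful (p · < p ·) i) A x ↔ x ∈ A ∧ ∀ y ∈ A, y ≠ x → p y ≤ i ∨ p x < p y := by
  unfold IsMaxOf harmful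
  simp only [hp.mem_topSet_iff]
  refine and_congr_right fun _ => forall₂_congr fun y _ => imp_congr_right fun _ => ?_
  omega

theorem IsRanking.isMaxOf_harmful_pred (hp : IsRanking p) {A : Finset X} {x : X} (hx : x ∈ A) :
    IsMaxOf (harmful (p · < p ·) (p x - 1)) A x := by
  have := (Finset.mem_Icc.1 (hp.2 x)).1
  refine (hp.isMaxOf_harmful_iff (by omega)).2 ⟨hx, fun y _ hyx => ?_⟩
  have := hp.1.ne hyx
  omega

end Ranking

theorem isReversal_of_mem [DecidableEq X] {c : Finset X → X} (hc : IsChoice c)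
    {A B : Finset X} (hAB : c A ≠ c B) (hA : c B ∈ A) (hB : c A ∈ B) : IsReversal c A B :=
  ⟨⟨_, hA⟩, ⟨_, hB⟩, fun h => hAB (congrArg c h), hAB,
    Finset.mem_inter.2 ⟨hc A ⟨_, hA⟩, hB⟩, Finset.mem_inter.2 ⟨hA, hc B ⟨_, hB⟩⟩⟩

theorem sp_le_of_rsp [Fintype X] {c : Finset X → X} {r : X → X → Prop} (hr : IsSLO r)
    {I : Finset ℕ} (hI : RSP c r I) {m : ℕ} (hm : m ∈ I) (hmax : ∀ i ∈ I, i ≤ m) :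
    sp c ≤ m :=
  Nat.sInf_le ⟨r, hr, I, hI, hm, hmax⟩

theorem RSP.le_or_lt_of_lt [Fintype X] {c : Finset X → X} {p : X → ℕ} (hp : IsRanking p)
    {I : Finset ℕ} {j : ℕ} (hI : RSP c (p · < p ·) I) (hmax : ∀ i ∈ I, i ≤ j) :
    ∀ A : Finset X, A.Nonempty → j < p (c A) →
      ∀ y ∈ A, y ≠ c A → p y ≤ j ∨ p (c A) < p y := by
  intro A hA hj y hy hyc
  obtain ⟨i, hi, hmaxA⟩ := hI.2.2 A hA
  have := hmax i hi
  have := ((hp.isMaxOf_harmful_iff (by omega)).1 hmaxA).2 y hy hyc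
  omega

section Demote

variable [DecidableEq X] {c : Finset X → X} {p : X → ℕ} {x₀ : X} {j q : ℕ}

/-- `x₀` moves down from position `p x₀` to position `q`; the elements in between move up. -/
def demote (p : X → ℕ) (x₀ : X) (q : ℕ) (x : X) : ℕ :=
  if x = x₀ then q else if p x < p x₀ then p x else if p x ≤ q then p x - 1 else p x

theorem demote_self : demote p x₀ q x₀ = q := if_pos rfl

theorem demote_lt_demote_iff (hp : Function.Injective p) {x y : X} (hx : x ≠ x₀) (hy : y ≠ x₀) :
    demote p x₀ q x < demote p x₀ q y ↔ p x < p y := by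
  have := hp.ne hx
  have := hp.ne hy
  simp only [demote, if_neg hx, if_neg hy]
  split_ifs <;> omega

theorem demote_lt_iff (hp : Function.Injective p) (hx₀ : p x₀ ≤ j) (hjq : j ≤ q) {x : X}
    (hx : x ≠ x₀) :
    demote p x₀ q x < j ↔ p x ≤ j := by
  have := hp.ne hx
  simp only [demote, if_neg hx]
  split_ifs <;> omega

theorem demote_lt_self (hp : Function.Injective p) (hq : p x₀ ≤ q) {x : X} (hx : x ≠ x₀)
    (hxq : p x ≤ q) : demote p x₀ q x < q := by
  have := hp.ne hx
  simp only [demote, if_neg hx]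
  split_ifs <;> omega

theorem lt_demote (hq : p x₀ ≤ q) {y : X} (hy : q < p y) : q < demote p x₀ q y := by
  have hyx₀ : y ≠ x₀ := by rintro rfl; omega
  simp only [demote, if_neg hyx₀]
  split_ifs <;> omega

theorem demote_ne_self (hp : Function.Injective p) (hq : p x₀ ≤ q) {x : X} (hx : x ≠ x₀) :
    demote p x₀ q x ≠ q := by
  have := hp.ne hx
  simp only [demote, if_neg hx]
  split_ifs <;> omega

theorem lt_of_forall_reversal_le (hc : IsChoice c) (hp : Function.Injective p)
    (htail : ∀ A : Finset X, A.Nonempty → j < p (c A) →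
      ∀ y ∈ A, y ≠ c A → p y ≤ j ∨ p (c A) < p y)
    (hrev : ∀ A B : Finset X, c A = x₀ → c B ∈ A → x₀ ∈ B → p (c B) ≤ j)
    {A B : Finset X} {y : X} (hA : c A = x₀) (hyA : y ∈ A) (hy : j < p y)
    (hB : x₀ ∈ B) (hjB : j < p (c B)) : p (c B) < p y := by
  rcases lt_trichotomy (p (c B)) (p y) with h | h | h
  · exact h
  · have := hrev A B hA (hp h ▸ hyA) hB
    omega
  set C : Finset X := {x₀, y, c B}
  have hcC : c C ∈ C := hc C (Finset.insert_nonempty _ _)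
  simp only [C, Finset.mem_insert, Finset.mem_singleton] at hcC
  rcases hcC with hcC | hcC | hcC
  · have := hrev C B hcC (by simp [C]) hB
    omega
  · have := hrev A C hA (hcC ▸ hyA) (by simp [C])
    rw [hcC] at this
    omega
  · have := htail C (Finset.insert_nonempty _ _) (hcC ▸ hjB) y (by simp [C])
      (hcC ▸ fun hyc => h.ne' (congrArg p hyc).symm)
    rw [hcC] at this
    omega

variable [Fintype X]

theorem IsRanking.demote (hp : IsRanking p) (hq : p x₀ ≤ q)
    (hqn : q ≤ Fintype.card X) : IsRanking (demote p x₀ q) := by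
  refine ⟨fun x y hxy => ?_, fun x => ?_⟩
  · by_contra hne
    rcases eq_or_ne x x₀ with hx | hx <;> rcases eq_or_ne y x₀ with hy | hy
    · exact hne (hx.trans hy.symm)
    · rw [hx, demote_self] at hxy
      exact demote_ne_self hp.1 hq hy hxy.symm
    · rw [hy, demote_self] at hxy
      exact demote_ne_self hp.1 hq hx hxy
    · rcases lt_or_gt_of_ne (hp.1.ne hne) with h | h
      · exact ((demote_lt_demote_iff hp.1 hx hy).2 h).ne hxy
      · exact ((demote_lt_demote_iff hp.1 hy hx).2 h).ne' hxy
  · have h₀ := Finset.mem_Icc.1 (hp.2 x₀)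
    rw [Finset.mem_Icc]
    rcases eq_or_ne x x₀ with hx | hx
    · rw [hx, demote_self]
      omega
    · have := Finset.mem_Icc.1 (hp.2 x)
      have := hp.1.ne hx
      simp only [_root_.demote, if_neg hx]
      split_ifs <;> omega

theorem rsp_demote (hc : IsChoice c) (hp : IsRanking p) (hj : 1 ≤ j)
    (hx₀ : p x₀ ≤ j) (hjq : j ≤ q) (hqn : q ≤ Fintype.card X)
    (htail : ∀ A : Finset X, A.Nonempty → j < p (c A) →
      ∀ y ∈ A, y ≠ c A → p y ≤ j ∨ p (c A) < p y)
    (hbelow : ∀ B : Finset X, x₀ ∈ B → j < p (c B) → p (c B) ≤ q)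
    (habove : ∀ A : Finset X, c A = x₀ → ∀ y ∈ A, j < p y → q < p y) :
    RSP c (demote p x₀ q · < demote p x₀ q ·) (Finset.range j) := by
  have hp' : IsRanking (demote p x₀ q) := hp.demote (hx₀.trans hjq) hqn
  refine ⟨⟨0, Finset.mem_range.2 hj⟩, fun i hi => ?_, fun A hA => ?_⟩
  · have := Finset.mem_range.1 hi
    omega
  have hcA := hc A hA
  by_cases hlt : demote p x₀ q (c A) < j
  · exact ⟨_, Finset.mem_range.2 (by omega), hp'.isMaxOf_harmful_pred hcA⟩
  refine ⟨j - 1, Finset.mem_range.2 (by omega),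
    (hp'.isMaxOf_harmful_iff (by omega)).2 ⟨hcA, fun y hy hyc => ?_⟩⟩
  rcases eq_or_ne (c A) x₀ with hcx₀ | hcx₀
  · have hyx₀ : y ≠ x₀ := hcx₀ ▸ hyc
    rw [hcx₀, demote_self]
    by_cases hyj : p y ≤ j
    · have := (demote_lt_iff hp.1 hx₀ hjq hyx₀).2 hyj
      omega
    · exact Or.inr (lt_demote (hx₀.trans hjq) (habove A hcx₀ y hy (by omega)))
  have hjc : j < p (c A) := by
    by_contra h
    exact hlt ((demote_lt_iff hp.1 hx₀ hjq hcx₀).2 (by omega))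
  rcases eq_or_ne y x₀ with rfl | hyx₀
  · rw [demote_self]
    exact Or.inr (demote_lt_self hp.1 (hx₀.trans hjq) hcx₀ (hbelow A hy hjc))
  rcases htail A hA hjc y hy hyc with hyj | hcy
  · have := (demote_lt_iff hp.1 hx₀ hjq hyx₀).2 hyj
    omega
  · exact Or.inr ((demote_lt_demote_iff hp.1 hcx₀ hyx₀).2 hcy)

theorem exists_demotion_bound (hc : IsChoice c) (hp : IsRanking p) (hjn : j ≤ Fintype.card X)
    (htail : ∀ A : Finset X, A.Nonempty → j < p (c A) →
      ∀ y ∈ A, y ≠ c A → p y ≤ j ∨ p (c A) < p y)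
    (hrev : ∀ A B : Finset X, c A = x₀ → c B ∈ A → x₀ ∈ B → p (c B) ≤ j) :
    ∃ q, j ≤ q ∧ q ≤ Fintype.card X ∧
      (∀ B : Finset X, x₀ ∈ B → j < p (c B) → p (c B) ≤ q) ∧
      (∀ A : Finset X, c A = x₀ → ∀ y ∈ A, j < p y → q < p y) := by
  let S : Finset (Finset X) := Finset.univ.filter (x₀ ∈ ·)
  refine ⟨max j (S.sup (p ∘ c)), le_max_left _ _,
    max_le hjn (Finset.sup_le fun B _ => (Finset.mem_Icc.1 (hp.2 _)).2),
    fun B hB _ => le_max_of_le_right (Finset.le_sup (f := p ∘ c) (by simp [S, hB])),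
    fun A hA y hy hjy =>
      max_lt hjy ((Finset.sup_lt_iff (Nat.zero_lt_of_lt hjy)).2 fun B hBS => ?_)⟩
  have hB : x₀ ∈ B := by simpa [S] using hBS
  by_cases hjB : j < p (c B)
  · exact lt_of_forall_reversal_le hc hp.1 htail hrev hA hy hjy hB hjB
  · exact (not_lt.1 hjB).trans_lt hjy

end Demote

theorem exists_isRanking_of_enum [Fintype X] {r : X → X → Prop} (hr : IsSLO r) {e : ℕ → X}
    (hsurj : ∀ x : X, ∃ h : ℕ, 1 ≤ h ∧ h ≤ Fintype.card X ∧ e h = x)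
    (hord : ∀ h i : ℕ, 1 ≤ h → h < i → i ≤ Fintype.card X → r (e h) (e i)) :
    ∃ p : X → ℕ, IsRanking p ∧ r = (p · < p ·) ∧
      ∀ g, 1 ≤ g → g ≤ Fintype.card X → p (e g) = g := by
  choose p hp1 hpn hpe using hsurj
  have hirr : ∀ x, ¬ r x x := fun x h => hr.1 x x h h
  have hlt : ∀ x y, p x < p y → r x y := fun x y h => by
    simpa [hpe] using hord _ _ (hp1 x) h (hpn y)
  refine ⟨p, ⟨fun x y h => by rw [← hpe x, ← hpe y, h], fun x => Finset.mem_Icc.2 ⟨hp1 x, hpn x⟩⟩,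
    ?_, fun g hg1 hgn => ?_⟩
  · ext x y
    refine ⟨fun h => ?_, hlt x y⟩
    rcases lt_trichotomy (p x) (p y) with h' | h' | h'
    · exact h'
    · have hxy : x = y := by rw [← hpe x, ← hpe y, h']
      exact (hirr x (hxy ▸ h)).elim
    · exact (hr.1 x y h (hlt y x h')).elim
  · by_contra hne
    rcases lt_or_gt_of_ne hne with h | h
    · exact hirr (e g) (by simpa [hpe] using hord _ _ (hp1 _) h hgn)
    · exact hirr (e g) (by simpa [hpe] using hord _ _ hg1 h (hpn _))

theorem stmt12 [Fintype X] [DecidableEq X] (c : Finset X → X) (hc : IsChoice c)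
    (j : ℕ) (hsp : sp c = j)
    (r : X → X → Prop) (hr : IsSLO r)
    (e : ℕ → X)
    (hsurj : ∀ x : X, ∃ h : ℕ, 1 ≤ h ∧ h ≤ Fintype.card X ∧ e h = x)
    (hord : ∀ h i : ℕ, 1 ≤ h → h < i → i ≤ Fintype.card X → r (e h) (e i))
    (I : Finset ℕ) (hI : RSP c r I) (hjI : j ∈ I) (hmax : ∀ i ∈ I, i ≤ j) :
    ∀ h : ℕ, 1 ≤ h → h ≤ j →
      ∃ A B : Finset X, ∃ y : X, IsReversal c A B ∧
        (∀ g : ℕ, 1 ≤ g → g ≤ j → y ≠ e g) ∧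
        ((c A = e h ∧ c B = y) ∨ (c A = y ∧ c B = e h)) := by
  intro h h1 hhj
  by_contra hcon
  obtain ⟨p, hp, rfl, hpe⟩ := exists_isRanking_of_enum hr hsurj hord
  have hjn : j ≤ Fintype.card X := by
    have := hI.2.1 j hjI
    omega
  have hx₀ : p (e h) = h := hpe h h1 (by omega)
  have hrev : ∀ A B : Finset X, c A = e h → c B ∈ A → e h ∈ B → p (c B) ≤ j := by
    intro A B hA hBA hB
    by_contra hjB
    refine hcon ⟨A, B, c B, isReversal_of_mem hc (fun hAB => ?_) hBA (hA ▸ hB),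
      fun g hg1 hgj hBg => ?_, Or.inl ⟨hA, rfl⟩⟩
    · rw [← hAB, hA, hx₀] at hjB
      omega
    · rw [hBg, hpe g hg1 (by omega)] at hjB
      omega
  have htail := hI.le_or_lt_of_lt hp hmax
  obtain ⟨q, hjq, hqn, hbelow, habove⟩ := exists_demotion_bound hc hp hjn htail hrev
  have hsp' : sp c ≤ j - 1 :=
    sp_le_of_rsp (hp.demote (by omega) hqn).isSLO
      (rsp_demote hc hp (by omega) (by omega) hjq hqn htail hbelow habove)
      (Finset.mem_range.2 (by omega)) fun i hi => by have := Finset.mem_range.1 hi; omega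
  omega
end

section
/- Let c be a choice function on a finite nonempty set X and let 1 ≤ j ≤ |X|−1. Then sp(c) = j if and only if c violates WARP under constant nonreciprocal selection of j items, i.e.: (i) for every subset D ⊂ X with |D| < j there is a reversal (A, B) of c with c(A) ∉ D and c(B) ∉ D; and (ii) there is a set {x_1, …, x_j} ⊂ X of j distinct items such that (a) every reversal (A, B) of c satisfies c(A) = x_h or c(B) = x_h for some h ∈ {1, …, j}, and (b) there are reversals (A_1, B_1), …, (A_j, B_j) of c such that for every h ∈ {1, …, j}, either x_h = c(A_h) and y_h = c(B_h), or y_h = c(A_h) and x_h = c(B_h), for some y_h ∈ X \ {x_1, …, x_j}. -/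
variable {X : Type*}

/-!
Both sides say that the least size of a set of items meeting every reversal is `j`. If `c` is
rationalized by distortions of `r` of index at most `m`, two items outside the top `m` of `r` are
ranked as by `r` in each of them, so they never form a reversal. Conversely, if a set `T` of `m`
items meets every reversal, then `c` obeys WARP outside `T` and pairwise choice is a linear order
there; with `T` put on top, a menu whose choice lies in `T` is rationalized by the distortion
sending the items above its choice to the bottom, and every other menu by the `m`-th distortion.
-/

section Rank

variable {r : X → X → Prop}

noncomputable def rank (r : X → X → Prop) (x : X) : ℕ := Set.ncard {b | r b x}

lemma topSet_mono {i k : ℕ} (h : i ≤ k) : topSet r i ⊆ topSet r k :=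
  fun _ hx => lt_of_lt_of_le hx h

lemma isSLO_of_injective {β : Type*} [LinearOrder β] {f : X → β} (hf : Function.Injective f) :
    IsSLO fun a b => f a < f b :=
  ⟨fun _ _ => lt_asymm, fun _ _ _ => lt_trans, fun _ _ hab => lt_or_gt_of_ne (hf.ne hab)⟩

lemma IsSLO.irrefl (hr : IsSLO r) (x : X) : ¬ r x x := fun h => hr.1 x x h h

variable [Finite X]

lemma IsSLO.rank_lt_rank (hr : IsSLO r) {x y : X} (h : r x y) : rank r x < rank r y :=
  Set.ncard_lt_ncard ⟨fun b hb => hr.2.1 b x y hb h, fun hsub => hr.irrefl x (hsub h)⟩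

lemma IsSLO.rel_of_rank_le (hr : IsSLO r) {x y : X} (hne : x ≠ y) (h : rank r x ≤ rank r y) :
    r x y :=
  (hr.2.2 x y hne).resolve_right fun h' => (hr.rank_lt_rank h').not_ge h

lemma IsSLO.rank_injective (hr : IsSLO r) : Function.Injective (rank r) := by
  intro x y hxy
  by_contra hne
  exact (hr.rank_lt_rank (hr.rel_of_rank_le hne hxy.le)).ne hxy

lemma IsSLO.ncard_topSet_le (hr : IsSLO r) (i : ℕ) : (topSet r i).ncard ≤ i := by
  simpa using Set.ncard_le_ncard_of_injOn (s := topSet r i) (t := Set.Iio i) (rank r)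
    (fun _ hx => hx) hr.rank_injective.injOn

end Rank

section Harmful

variable {r : X → X → Prop} {i : ℕ} {a b : X}

lemma rel_of_harmful (h : harmful r i a b) (hb : b ∉ topSet r i) : r a b := by
  rcases h with ⟨hb', -⟩ | ⟨-, -, h⟩
  exacts [absurd hb' hb, h]

lemma isMaxOf_harmful_of_not_mem_topSet {A : Finset X} (hx : a ∈ A) (ha : a ∉ topSet r i)
    (h : ∀ y ∈ A, y ≠ a → y ∉ topSet r i → r a y) : IsMaxOf (harmful r i) A a := by
  refine ⟨hx, fun y hy hne => ?_⟩
  by_cases hyi : y ∈ topSet r i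
  · exact Or.inl ⟨hyi, fun h => absurd h ha⟩
  · exact Or.inr ⟨ha, hyi, h y hy hne hyi⟩

-- The distortion that sends exactly the items above `a` to the bottom puts `a` on top.
lemma IsSLO.isMaxOf_harmful_rank [Finite X] (hr : IsSLO r) {A : Finset X} (ha : a ∈ A) :
    IsMaxOf (harmful r (rank r a)) A a :=
  isMaxOf_harmful_of_not_mem_topSet ha (lt_irrefl (rank r a))
    fun _ _ hne hy => hr.rel_of_rank_le hne.symm (not_lt.1 hy)

end Harmful

section Covers

variable [DecidableEq X] {c : Finset X → X} {T : Finset X}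

def CoversReversals (c : Finset X → X) (T : Finset X) : Prop :=
  ∀ A B : Finset X, IsReversal c A B → c A ∈ T ∨ c B ∈ T

lemma not_coversReversals_iff :
    ¬ CoversReversals c T ↔ ∃ A B : Finset X, IsReversal c A B ∧ c A ∉ T ∧ c B ∉ T := by
  simp only [CoversReversals, not_forall, not_or, exists_prop]

lemma CoversReversals.mono {T' : Finset X} (hT : CoversReversals c T) (h : T ⊆ T') :
    CoversReversals c T' :=
  fun A B hAB => (hT A B hAB).imp (@h _) (@h _)

lemma CoversReversals.exists_partner {x : X} (hT : CoversReversals c T)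
    (hx : ¬ CoversReversals c (T.erase x)) :
    ∃ A B : Finset X, ∃ y : X, IsReversal c A B ∧ y ∉ T ∧
      ((c A = x ∧ c B = y) ∨ (c A = y ∧ c B = x)) := by
  obtain ⟨A, B, hAB, hA, hB⟩ := not_coversReversals_iff.1 hx
  have hne : c A ≠ c B := hAB.2.2.2.1
  simp only [Finset.mem_erase, not_and_or, not_not] at hA hB
  rcases hT A B hAB with hAT | hBT
  · have hAx : c A = x := hA.resolve_right (not_not.2 hAT)
    exact ⟨A, B, c B, hAB, hB.resolve_left (hAx ▸ hne.symm), Or.inl ⟨hAx, rfl⟩⟩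
  · have hBx : c B = x := hB.resolve_right (not_not.2 hBT)
    exact ⟨A, B, c A, hAB, hA.resolve_left (hBx ▸ hne), Or.inr ⟨rfl, hBx⟩⟩

lemma CoversReversals.choice_eq (hc : IsChoice c) (hT : CoversReversals c T) {A B : Finset X}
    (hA : c A ∉ T) (hB : c B ∉ T) (hAB : c A ∈ B) (hBA : c B ∈ A) : c A = c B := by
  by_contra hne
  have hrev : IsReversal c A B :=
    ⟨⟨_, hBA⟩, ⟨_, hAB⟩, fun h => hne (congrArg c h), hne,
      Finset.mem_inter.2 ⟨hc A ⟨_, hBA⟩, hAB⟩, Finset.mem_inter.2 ⟨hBA, hc B ⟨_, hAB⟩⟩⟩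
  exact (hT A B hrev).elim hA hB

def PairPref (c : Finset X → X) (a b : X) : Prop := a ≠ b ∧ c {a, b} = a

lemma PairPref.asymm {a b : X} (hab : PairPref c a b) (hba : PairPref c b a) : False := by
  obtain ⟨hne, h1⟩ := hab
  obtain ⟨-, h2⟩ := hba
  rw [Finset.pair_comm, h1] at h2
  exact hne h2

lemma pairPref_total (hc : IsChoice c) {a b : X} (hne : a ≠ b) :
    PairPref c a b ∨ PairPref c b a := by
  rcases Finset.mem_insert.1 (hc {a, b} (Finset.insert_nonempty _ _)) with h | h
  · exact Or.inl ⟨hne, h⟩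
  · rw [Finset.mem_singleton, Finset.pair_comm] at h
    exact Or.inr ⟨hne.symm, h⟩

lemma CoversReversals.pairPref_choice (hc : IsChoice c) (hT : CoversReversals c T)
    {A : Finset X} (hAT : c A ∉ T) {y : X} (hy : y ∈ A) (hyT : y ∉ T) (hne : c A ≠ y) :
    PairPref c (c A) y := by
  refine ⟨hne, ?_⟩
  rcases Finset.mem_insert.1 (hc {c A, y} (Finset.insert_nonempty _ _)) with h | h
  · exact h
  · rw [Finset.mem_singleton] at h
    have hAy := hT.choice_eq hc (B := {c A, y}) hAT (by rwa [h]) (Finset.mem_insert_self _ _)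
      (by rwa [h])
    exact absurd (hAy.trans h) hne

-- Compare each pair with the choice from the triple `{a, b, d}`.
lemma CoversReversals.pairPref_trans (hc : IsChoice c) (hT : CoversReversals c T) {a b d : X}
    (ha : a ∉ T) (hb : b ∉ T) (hd : d ∉ T) (hab : PairPref c a b) (hbd : PairPref c b d) :
    PairPref c a d := by
  set M : Finset X := {a, b, d}
  have hM : c M = a ∨ c M = b ∨ c M = d := by simpa [M] using hc M (by simp [M])
  have hMT : c M ∉ T := by rcases hM with h | h | h <;> rwa [h]
  have beats : ∀ y ∈ M, y ∉ T → c M ≠ y → PairPref c (c M) y :=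
    fun y hy hyT hne => hT.pairPref_choice hc hMT hy hyT hne
  rcases hM with h | h | h <;> rw [h] at beats
  · refine beats d (by simp [M]) hd fun had => ?_
    exact (had ▸ hbd).asymm hab
  · exact (hab.asymm (beats a (by simp [M]) ha hab.1.symm)).elim
  · exact (hbd.asymm (beats b (by simp [M]) hb hbd.1.symm)).elim

end Covers

section Stack

variable {s t : X → X → Prop} {T : Finset X}

def stackRel (T : Finset X) (s t : X → X → Prop) : X → X → Prop := fun a b =>
  (a ∈ T ∧ b ∉ T) ∨ (a ∈ T ∧ b ∈ T ∧ s a b) ∨ (a ∉ T ∧ b ∉ T ∧ t a b)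

lemma isSLO_stackRel (hs : IsSLO s) (ht_asymm : ∀ a b, a ∉ T → b ∉ T → t a b → ¬ t b a)
    (ht_trans : ∀ a b d, a ∉ T → b ∉ T → d ∉ T → t a b → t b d → t a d)
    (ht_total : ∀ a b, a ∉ T → b ∉ T → a ≠ b → t a b ∨ t b a) : IsSLO (stackRel T s t) := by
  refine ⟨?_, ?_, ?_⟩
  · rintro a b (⟨ha, hb⟩ | ⟨ha, hb, h⟩ | ⟨ha, hb, h⟩) (⟨hb', ha'⟩ | ⟨hb', ha', h'⟩ | ⟨hb', ha', h'⟩)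
    all_goals first | contradiction | exact hs.1 _ _ h h' | exact ht_asymm _ _ ha hb h h'
  · rintro a b d (⟨ha, hb⟩ | ⟨ha, hb, h⟩ | ⟨ha, hb, h⟩) (⟨hb', hd⟩ | ⟨hb', hd, h'⟩ | ⟨hb', hd, h'⟩)
    all_goals first
      | contradiction
      | exact Or.inl ⟨ha, hd⟩
      | exact Or.inr (Or.inl ⟨ha, hd, hs.2.1 _ _ _ h h'⟩)
      | exact Or.inr (Or.inr ⟨ha, hd, ht_trans _ _ _ ha hb hd h h'⟩)
  · intro a b hab
    by_cases ha : a ∈ T <;> by_cases hb : b ∈ T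
    · exact (hs.2.2 a b hab).imp (fun h => Or.inr (Or.inl ⟨ha, hb, h⟩))
        (fun h => Or.inr (Or.inl ⟨hb, ha, h⟩))
    · exact Or.inl (Or.inl ⟨ha, hb⟩)
    · exact Or.inr (Or.inl ⟨hb, ha⟩)
    · exact (ht_total a b ha hb hab).imp (fun h => Or.inr (Or.inr ⟨ha, hb, h⟩))
        (fun h => Or.inr (Or.inr ⟨hb, ha, h⟩))

lemma topSet_stackRel [Finite X] (hs : ∀ a, ¬ s a a) : topSet (stackRel T s t) T.card = T := by
  ext x
  simp only [topSet, Set.mem_ofPred_eq, Finset.mem_coe]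
  constructor
  · intro hx
    by_contra hxT
    refine hx.not_ge ?_
    calc T.card = (T : Set X).ncard := (Set.ncard_coe_finset T).symm
      _ ≤ _ := Set.ncard_le_ncard fun b hb => Or.inl ⟨hb, hxT⟩
  · intro hxT
    calc _ < (T : Set X).ncard := Set.ncard_lt_ncard ⟨?_, fun h => ?_⟩
      _ = T.card := Set.ncard_coe_finset T
    · rintro b (⟨hb, -⟩ | ⟨hb, -⟩ | ⟨-, hx, -⟩)
      exacts [hb, hb, absurd hxT hx]
    · rcases h hxT with ⟨-, hx⟩ | ⟨-, -, hxx⟩ | ⟨hx, -⟩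
      exacts [hx hxT, hs x hxx, hx hxT]

end Stack
section Rationalization

variable [Fintype X] [DecidableEq X] {c : Finset X → X}

-- Two items outside the top `m` are ranked as by `r` in every distortion `harmful r i`, `i ≤ m`.
lemma RSP.exists_coversReversals {r : X → X → Prop} {I : Finset ℕ} {m : ℕ} (hr : IsSLO r)
    (hI : RSP c r I) (hIm : ∀ i ∈ I, i ≤ m) :
    ∃ T : Finset X, T.card ≤ m ∧ CoversReversals c T := by
  refine ⟨(Set.toFinite (topSet r m)).toFinset, ?_, fun A B hAB => ?_⟩
  · rw [← Set.ncard_eq_toFinset_card]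
    exact hr.ncard_topSet_le m
  · simp only [Set.Finite.mem_toFinset]
    by_contra! hout
    obtain ⟨hA, hB, -, hne, hAB, hBA⟩ := hAB
    obtain ⟨i, hi, -, hAmax⟩ := hI.2.2 A hA
    obtain ⟨k, hk, -, hBmax⟩ := hI.2.2 B hB
    exact hr.1 _ _
      (rel_of_harmful (hAmax _ (Finset.mem_inter.1 hBA).1 hne.symm)
        fun h => hout.2 (topSet_mono (hIm i hi) h))
      (rel_of_harmful (hBmax _ (Finset.mem_inter.1 hAB).2 hne)
        fun h => hout.1 (topSet_mono (hIm k hk) h))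

-- Put `T` on top (in any order) of the pairwise choices outside `T`.
lemma CoversReversals.exists_rsp (hc : IsChoice c) {T : Finset X} (hT : CoversReversals c T)
    (hTX : T.card ≤ Fintype.card X - 1) :
    ∃ r : X → X → Prop, IsSLO r ∧ ∃ I : Finset ℕ, RSP c r I ∧ T.card ∈ I ∧ ∀ i ∈ I, i ≤ T.card := by
  have hs := isSLO_of_injective (Fintype.equivFin X).injective
  set r := stackRel T (fun a b => Fintype.equivFin X a < Fintype.equivFin X b) (PairPref c)
  have hr : IsSLO r := isSLO_stackRel hs (fun _ _ _ _ => PairPref.asymm)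
    (fun _ _ _ ha hb hd => hT.pairPref_trans hc ha hb hd) (fun _ _ _ _ => pairPref_total hc)
  have htop : topSet r T.card = T := topSet_stackRel hs.irrefl
  have hI : ∀ i ∈ Finset.range (T.card + 1), i ≤ T.card :=
    fun i hi => Nat.lt_succ_iff.1 (Finset.mem_range.1 hi)
  refine ⟨r, hr, Finset.range (T.card + 1), ⟨⟨_, Finset.self_mem_range_succ _⟩,
    fun i hi => (hI i hi).trans hTX, fun A hA => ?_⟩, Finset.self_mem_range_succ _, hI⟩
  by_cases hAT : c A ∈ T
  · have hrank : rank r (c A) < T.card := by rwa [← Finset.mem_coe, ← htop] at hAT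
    exact ⟨rank r (c A), Finset.mem_range.2 (hrank.trans (Nat.lt_succ_self _)),
      hr.isMaxOf_harmful_rank (hc A hA)⟩
  · refine ⟨T.card, Finset.self_mem_range_succ _, isMaxOf_harmful_of_not_mem_topSet (hc A hA)
      (by rwa [htop]) fun y hy hne hyT => ?_⟩
    rw [htop, Finset.mem_coe] at hyT
    exact Or.inr (Or.inr ⟨hAT, hyT, hT.pairPref_choice hc hAT hy hyT hne.symm⟩)

lemma sp_eq_sInf_card_coversReversals (hc : IsChoice c) :
    sp c = sInf {m | m ≤ Fintype.card X - 1 ∧ ∃ T : Finset X, T.card = m ∧ CoversReversals c T} := by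
  refine congrArg sInf (Set.ext fun m => ⟨?_, ?_⟩)
  · rintro ⟨r, hr, I, hI, hmI, hIm⟩
    have hmX := hI.2.1 m hmI
    obtain ⟨T, hTm, hT⟩ := hI.exists_coversReversals hr hIm
    obtain ⟨T', hTT', hT'm⟩ := Finset.exists_superset_card_eq hTm (hmX.trans (Nat.sub_le _ _))
    exact ⟨hmX, T', hT'm, hT.mono hTT'⟩
  · rintro ⟨hmX, T, rfl, hT⟩
    exact hT.exists_rsp hc hmX

end Rationalization

lemma Nat.sInf_eq_iff_isLeast {s : Set ℕ} {j : ℕ} (hj : j ≠ 0) : sInf s = j ↔ IsLeast s j := by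
  refine ⟨fun h => ?_, IsLeast.csInf_eq⟩
  have hs : s.Nonempty := by
    by_contra hs
    rw [Set.not_nonempty_iff_eq_empty.1 hs, Nat.sInf_empty] at h
    exact hj h.symm
  exact h ▸ isLeast_csInf hs

theorem stmt13 [Fintype X] [DecidableEq X] (c : Finset X → X) (hc : IsChoice c)
    (j : ℕ) (hj1 : 1 ≤ j) (hj2 : j ≤ Fintype.card X - 1) :
    sp c = j ↔ ViolatesCNS c j := by
  rw [sp_eq_sInf_card_coversReversals hc, Nat.sInf_eq_iff_isLeast (by omega)]
  constructor
  · rintro ⟨⟨-, xs, hxs, hcov⟩, hleast⟩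
    have hsmall : ∀ D : Finset X, D.card < j → ¬ CoversReversals c D :=
      fun D hD hD' => (hleast ⟨by omega, D, rfl, hD'⟩).not_gt hD
    refine ⟨fun D hD => not_coversReversals_iff.1 (hsmall D hD), xs, hxs, hcov,
      fun x hx => hcov.exists_partner (hsmall _ ?_)⟩
    rw [Finset.card_erase_of_mem hx]
    omega
  · rintro ⟨hsmall, xs, hxs, hcov, -⟩
    refine ⟨⟨hj2, xs, hxs, hcov⟩, ?_⟩
    rintro m ⟨-, D, rfl, hD⟩
    by_contra! hDj
    exact not_coversReversals_iff.2 (hsmall D hDj) hD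
end

section
/- Let c be a choice function on a finite nonempty set X with sp(c) = j for some 1 ≤ j ≤ |X|−1. Then there are at least j! pairwise distinct strict linear orders ▷ on X such that the family {▷_0, ▷_1, …, ▷_j} of harmful distortions of ▷ of index at most j is a rationalization by self-punishment of c by ▷. -/
/-!
Take a strict linear order `▷` realising `sp c = j` and record it by its rank function
`X ≃ Fin n`. Every index used is at most `j`, so on each menu `c` picks the `▷`-best item among
those outside the top `j`, unless it picks one of the top `j` items. Now reorder the top `j`
items arbitrarily (there are `j!` ways). An item of rank `k` is the overall maximum of the
`k`-th harmful distortion, which handles menus where `c` picks a top item. Otherwise the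
`j`-th distortion works, because it only looks at the unchanged order outside the top `j`.
-/

variable {X : Type*}

lemma topSet_mono_s15 (r : X → X → Prop) : Monotone (topSet r) :=
  fun _ _ hij _ ha => lt_of_lt_of_le ha hij

lemma rel_of_harmful_of_notMem_topSet {r : X → X → Prop} {i : ℕ} {a b : X}
    (hb : b ∉ topSet r i) (h : harmful r i a b) : r a b := by
  rcases h with ⟨hb', _⟩ | ⟨_, _, hab⟩
  · exact absurd hb' hb
  · exact hab

def rankOrder {n : ℕ} (e : X ≃ Fin n) : X → X → Prop := fun a b => e a < e b

section rankOrder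

variable {n : ℕ} (e : X ≃ Fin n)

lemma isSLO_rankOrder : IsSLO (rankOrder e) :=
  ⟨fun _ _ h => h.asymm, fun _ _ _ => lt_trans,
    fun _ _ hab => lt_or_gt_of_ne (e.injective.ne hab)⟩

lemma ncard_rankOrder_above (a : X) : {b | rankOrder e b a}.ncard = e a := by
  have himage : e '' {b | rankOrder e b a} = ↑(Finset.Iio (e a)) := by
    ext k
    simp only [Set.mem_image, Set.mem_ofPred_eq, rankOrder, Finset.coe_Iio, Set.mem_Iio]
    exact ⟨fun ⟨b, hb, hbk⟩ => hbk ▸ hb, fun hk => ⟨e.symm k, by simpa using hk, by simp⟩⟩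
  rw [← Set.ncard_image_of_injective _ e.injective, himage, Set.ncard_coe_finset, Fin.card_Iio]

lemma mem_topSet_rankOrder {i : ℕ} {a : X} : a ∈ topSet (rankOrder e) i ↔ (e a : ℕ) < i := by
  rw [topSet, Set.mem_ofPred_eq, ncard_rankOrder_above]

lemma rankOrder_injective : Function.Injective (rankOrder : (X ≃ Fin n) → X → X → Prop) := by
  intro e e' h
  ext a
  rw [← ncard_rankOrder_above e, ← ncard_rankOrder_above e', h]

lemma rankOrder_trans_injective :
    Function.Injective fun τ : Equiv.Perm (Fin n) => rankOrder (e.trans τ) := by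
  intro τ τ' h
  ext k
  simpa using congrArg (fun f : X ≃ Fin n => (f (e.symm k) : ℕ)) (rankOrder_injective h)

lemma isMaxOf_harmful_rankOrder_self {A : Finset X} {x : X} (hx : x ∈ A) :
    IsMaxOf (harmful (rankOrder e) (e x)) A x := by
  refine ⟨hx, fun y _ hyx => ?_⟩
  have hx_top : x ∉ topSet (rankOrder e) (e x) := by simp [mem_topSet_rankOrder]
  rcases lt_or_gt_of_ne (e.injective.ne hyx) with hlt | hgt
  · exact Or.inl ⟨(mem_topSet_rankOrder e).2 hlt, fun h => absurd h hx_top⟩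
  · exact Or.inr ⟨hx_top, by simpa [mem_topSet_rankOrder] using hgt.le, hgt⟩

lemma isMaxOf_harmful_rankOrder_of_le {A : Finset X} {x : X} {j : ℕ} (hx : x ∈ A)
    (hjx : j ≤ e x) (hbest : ∀ y ∈ A, y ≠ x → j ≤ e y → e x < e y) :
    IsMaxOf (harmful (rankOrder e) j) A x := by
  refine ⟨hx, fun y hy hyx => ?_⟩
  have hx_top : x ∉ topSet (rankOrder e) j := by simpa [mem_topSet_rankOrder] using hjx
  by_cases hyj : (e y : ℕ) < j
  · exact Or.inl ⟨(mem_topSet_rankOrder e).2 hyj, fun h => absurd h hx_top⟩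
  · exact Or.inr ⟨hx_top, by simpa [mem_topSet_rankOrder] using hyj,
      hbest y hy hyx (not_lt.1 hyj)⟩

end rankOrder

lemma val_perm_apply_lt_iff {n j : ℕ} {τ : Equiv.Perm (Fin n)}
    (hτ : ∀ k : Fin n, j ≤ k → τ k = k) (k : Fin n) : (τ k : ℕ) < j ↔ (k : ℕ) < j := by
  refine ⟨fun h => not_le.1 fun hk => ?_, fun h => not_le.1 fun hk => ?_⟩
  · rw [hτ k hk] at h
    exact hk.not_gt h
  · have : τ k = k := τ.injective (hτ _ hk)
    rw [this] at hk
    exact hk.not_gt h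

lemma exists_isMaxOf_harmful_rankOrder_trans {n j : ℕ} (e : X ≃ Fin n)
    {τ : Equiv.Perm (Fin n)} (hτ : ∀ k : Fin n, j ≤ k → τ k = k) {A : Finset X} {x : X}
    (hx : x ∈ A) (hbest : ∀ y ∈ A, y ≠ x → j ≤ e y → e x < e y) :
    ∃ i ≤ j, IsMaxOf (harmful (rankOrder (e.trans τ)) i) A x := by
  by_cases hxj : (e x : ℕ) < j
  · exact ⟨τ (e x), ((val_perm_apply_lt_iff hτ _).2 hxj).le,
      isMaxOf_harmful_rankOrder_self (e.trans τ) hx⟩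
  · have hfix : ∀ y, j ≤ (e y : ℕ) → (e.trans τ) y = e y := fun y hy => hτ _ hy
    have hle : ∀ y, j ≤ ((e.trans τ) y : ℕ) → j ≤ (e y : ℕ) := fun y hy =>
      not_lt.1 fun h => hy.not_gt ((val_perm_apply_lt_iff hτ _).2 h)
    refine ⟨j, le_rfl, isMaxOf_harmful_rankOrder_of_le _ hx ?_ fun y hy hyx hyj => ?_⟩
    · rw [hfix x (not_lt.1 hxj)]
      exact not_lt.1 hxj
    · rw [hfix x (not_lt.1 hxj), hfix y (hle y hyj)]
      exact hbest y hy hyx (hle y hyj)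

lemma exists_injective_perm_fixing_ge {n j : ℕ} (hjn : j ≤ n) :
    ∃ τ : Fin j.factorial → Equiv.Perm (Fin n), Function.Injective τ ∧
      ∀ m, ∀ k : Fin n, j ≤ k → τ m k = k := by
  let E : Fin j.factorial ≃ Equiv.Perm (Fin j) :=
    (Fintype.equivFinOfCardEq (by rw [Fintype.card_perm, Fintype.card_fin])).symm
  refine ⟨fun m => Equiv.Perm.extendDomainHom (Fin.castLEquiv hjn) (E m),
    (Equiv.Perm.extendDomainHom_injective _).comp E.injective, fun m k hk => ?_⟩
  exact Equiv.Perm.extendDomain_apply_not_subtype _ _ (not_lt.2 hk)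

section IsSLO

variable {r : X → X → Prop}

lemma IsSLO.ncard_above_lt_ncard_above [Finite X] (hr : IsSLO r) {a b : X} (hab : r a b) :
    {x | r x a}.ncard < {x | r x b}.ncard :=
  Set.ncard_lt_ncard ⟨fun x hx => hr.2.1 x a b hx hab, fun h => hr.1 a a (h hab) (h hab)⟩
    (Set.toFinite _)

lemma IsSLO.ncard_above_lt_card [Fintype X] (hr : IsSLO r) (a : X) :
    {x | r x a}.ncard < Fintype.card X := by
  rw [← Nat.card_eq_fintype_card]
  refine Set.ncard_lt_card fun h => ?_
  have haa : a ∈ {x | r x a} := h ▸ Set.mem_univ a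
  exact hr.1 a a haa haa

lemma IsSLO.exists_eq_rankOrder [Fintype X] (hr : IsSLO r) :
    ∃ e : X ≃ Fin (Fintype.card X), r = rankOrder e := by
  let rank : X → Fin (Fintype.card X) := fun a => ⟨{x | r x a}.ncard, hr.ncard_above_lt_card a⟩
  have hmono : ∀ {a b}, r a b → rank a < rank b := fun hab => hr.ncard_above_lt_ncard_above hab
  have hinj : Function.Injective rank := by
    intro a b hab
    by_contra hne
    rcases hr.2.2 a b hne with h | h
    · exact (hmono h).ne hab
    · exact (hmono h).ne hab.symm
  let e := Equiv.ofBijective rank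
    ((Fintype.bijective_iff_injective_and_card rank).2 ⟨hinj, (Fintype.card_fin _).symm⟩)
  refine ⟨e, funext₂ fun a b => propext ⟨hmono, fun h => ?_⟩⟩
  rcases hr.2.2 a b (fun hab => h.ne (congrArg rank hab)) with hab | hba
  · exact hab
  · exact absurd (hmono hba) h.asymm

end IsSLO

section RSP

variable [Fintype X] {c : Finset X → X} {r : X → X → Prop} {I : Finset ℕ}

lemma RSP.mem (h : RSP c r I) {A : Finset X} (hA : A.Nonempty) : c A ∈ A := by
  obtain ⟨_, _, hmax⟩ := h.2.2 A hA
  exact hmax.1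

lemma RSP.rel_of_notMem_topSet (h : RSP c r I) {j : ℕ} (hI : ∀ i ∈ I, i ≤ j)
    {A : Finset X} (hA : A.Nonempty) {y : X} (hy : y ∈ A) (hyc : y ≠ c A)
    (hyj : y ∉ topSet r j) : r (c A) y := by
  obtain ⟨i, hi, hmax⟩ := h.2.2 A hA
  exact rel_of_harmful_of_notMem_topSet (fun h => hyj (topSet_mono_s15 r (hI i hi) h))
    (hmax.2 y hy hyc)

lemma exists_rsp_of_sp_ne_zero (h : sp c ≠ 0) :
    ∃ r, IsSLO r ∧ ∃ I, RSP c r I ∧ sp c ∈ I ∧ ∀ i ∈ I, i ≤ sp c := by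
  have hne : {m | ∃ r, IsSLO r ∧ ∃ I, RSP c r I ∧ m ∈ I ∧ ∀ i ∈ I, i ≤ m}.Nonempty :=
    Set.nonempty_iff_ne_empty.2 fun hempty => h (by rw [sp, hempty, Nat.sInf_empty])
  exact Nat.sInf_mem hne

end RSP

theorem stmt15_general [Fintype X] (c : Finset X → X)
    (j : ℕ) (hj1 : 1 ≤ j) (hsp : sp c = j) :
    ∃ f : Fin (Nat.factorial j) → (X → X → Prop), Function.Injective f ∧
      ∀ k : Fin (Nat.factorial j), IsSLO (f k) ∧
        ∀ A : Finset X, A.Nonempty → ∃ i : ℕ, i ≤ j ∧ IsMaxOf (harmful (f k) i) A (c A) := by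
  obtain ⟨r, hr, I, hrsp, hjI, hI⟩ := exists_rsp_of_sp_ne_zero (c := c) (by omega)
  rw [hsp] at hjI hI
  have hjn : j < Fintype.card X := by
    have hj_le := hrsp.2.1 j hjI
    omega
  obtain ⟨e, rfl⟩ := hr.exists_eq_rankOrder
  obtain ⟨τ, hτ_inj, hτ_fix⟩ := exists_injective_perm_fixing_ge hjn.le
  refine ⟨fun k => rankOrder (e.trans (τ k)), (rankOrder_trans_injective e).comp hτ_inj,
    fun k => ⟨isSLO_rankOrder _, fun A hA => ?_⟩⟩
  refine exists_isMaxOf_harmful_rankOrder_trans e (hτ_fix k) (hrsp.mem hA)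
    fun y hy hyc hyj => hrsp.rel_of_notMem_topSet hI hA hy hyc ?_
  rwa [mem_topSet_rankOrder, not_lt]

theorem stmt15 [Fintype X] [DecidableEq X] (c : Finset X → X) (hc : IsChoice c)
    (j : ℕ) (hj1 : 1 ≤ j) (hj2 : j ≤ Fintype.card X - 1) (hsp : sp c = j) :
    ∃ f : Fin (Nat.factorial j) → (X → X → Prop), Function.Injective f ∧
      ∀ k : Fin (Nat.factorial j), IsSLO (f k) ∧
        ∀ A : Finset X, A.Nonempty → ∃ i : ℕ, i ≤ j ∧ IsMaxOf (harmful (f k) i) A (c A) :=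
  stmt15_general c j hj1 hsp
end
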